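/- Cramér's (Lundberg) exponential bound for ruin: in a random walk S_n = X_1 + ⋯ + X_n with i.i.d. real increments X_i having E[X_1] > 0 and with some R > 0 satisfying E[exp(−R X_1)] = 1, the probability that inf_n S_n ≤ −u (ruin with initial capital u ≥ 0) is at most exp(−R u). -/

import Mathlib

/-!
Put `W i = exp (-R X i)`. These are independent with mean one, so `M n = ∏ i < n, W i` is a
nonnegative martingale with `M (n + 1) = exp (-R S n)`, and ruin means `M` reaches
`c = exp (R u)`. On the event `A n` that `M` first reaches `c` at time `n`, independence of the
later factors gives `∫_{A n} M N = ∫_{A n} M n ≥ c P (A n)` for `N ≥ n`; the `A n` are disjoint,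
so summing yields `c P (ruin) ≤ ∫ M N = 1` (Ville's maximal inequality).
-/

open MeasureTheory ProbabilityTheory Finset
open scoped ENNReal

namespace ProbabilityTheory

variable {Ω β : Type*} [mβ : MeasurableSpace β]

abbrev pastMeasurableSpace (W : ℕ → Ω → β) (n : ℕ) : MeasurableSpace Ω :=
  ⨆ i ∈ Set.Iio n, mβ.comap (W i)

theorem measurable_pastMeasurableSpace (W : ℕ → Ω → β) {i n : ℕ} (hi : i < n) :
    Measurable[pastMeasurableSpace W n] (W i) :=
  measurable_iff_comap_le.mpr (le_biSup (fun j => mβ.comap (W j)) (show i ∈ Set.Iio n from hi))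

theorem measurable_prod_range_pastMeasurableSpace [CommMonoid β] [MeasurableMul₂ β]
    (W : ℕ → Ω → β) {k n : ℕ} (hkn : k ≤ n) :
    Measurable[pastMeasurableSpace W n] fun ω => ∏ i ∈ range k, W i ω :=
  Finset.measurable_prod _ fun _ hi =>
    measurable_pastMeasurableSpace W ((mem_range.mp hi).trans_le hkn)

variable [MeasurableSpace Ω]

theorem pastMeasurableSpace_le {W : ℕ → Ω → β} (hW : ∀ i, Measurable (W i)) (n : ℕ) :
    pastMeasurableSpace W n ≤ ‹MeasurableSpace Ω› :=
  iSup₂_le fun _ _ => (hW _).comap_le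

theorem lintegral_ofReal_eq_one_of_integral_eq_one {P : Measure Ω} {f : Ω → ℝ}
    (hf : 0 ≤ᵐ[P] f) (h : ∫ ω, f ω ∂P = 1) : ∫⁻ ω, ENNReal.ofReal (f ω) ∂P = 1 := by
  have hint : Integrable f P := Integrable.of_integral_ne_zero (by rw [h]; exact one_ne_zero)
  rw [← ofReal_integral_eq_lintegral_ofReal hint hf, h, ENNReal.ofReal_one]

variable {P : Measure Ω} {W : ℕ → Ω → ℝ≥0∞}

theorem lintegral_prod_eq_one_of_iIndepFun (hW : ∀ i, Measurable (W i)) (hind : iIndepFun W P)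
    (hone : ∀ i, ∫⁻ ω, W i ω ∂P = 1) (s : Finset ℕ) : ∫⁻ ω, ∏ i ∈ s, W i ω ∂P = 1 := by
  rw [lintegral_prod_eq_prod_lintegral_of_indepFun s W hind hW]
  exact prod_eq_one fun i _ => hone i

theorem setLIntegral_prod_range_eq (hW : ∀ i, Measurable (W i)) (hind : iIndepFun W P)
    (hone : ∀ i, ∫⁻ ω, W i ω ∂P = 1) {n N : ℕ} (hnN : n ≤ N) {A : Set Ω}
    (hA : MeasurableSet[pastMeasurableSpace W n] A) :
    ∫⁻ ω in A, ∏ i ∈ range N, W i ω ∂P = ∫⁻ ω in A, ∏ i ∈ range n, W i ω ∂P := by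
  have hindep : Indep (pastMeasurableSpace W n)
      (⨆ i ∈ Set.Ici n, ENNReal.measurableSpace.comap (W i)) P :=
    indep_iSup_of_disjoint (fun i => (hW i).comap_le) hind
      (Set.disjoint_left.mpr fun _ (hlt : _ < n) (hge : n ≤ _) => hlt.not_ge hge)
  have hfuture : Measurable[⨆ i ∈ Set.Ici n, ENNReal.measurableSpace.comap (W i)]
      fun ω => ∏ i ∈ Ico n N, W i ω :=
    Finset.measurable_prod _ fun i hi => measurable_iff_comap_le.mpr
      (le_biSup (fun j => ENNReal.measurableSpace.comap (W j))
        (show i ∈ Set.Ici n from (mem_Ico.mp hi).1))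
  have hpast : Measurable[pastMeasurableSpace W n]
      (A.indicator fun ω => ∏ i ∈ range n, W i ω) :=
    (measurable_prod_range_pastMeasurableSpace W le_rfl).indicator hA
  have hA' : MeasurableSet A := pastMeasurableSpace_le hW n A hA
  calc ∫⁻ ω in A, ∏ i ∈ range N, W i ω ∂P
      = ∫⁻ ω, (A.indicator fun ω => ∏ i ∈ range n, W i ω) ω * ∏ i ∈ Ico n N, W i ω ∂P := by
        rw [← lintegral_indicator hA']
        refine lintegral_congr fun ω => ?_
        by_cases hω : ω ∈ A <;> simp [hω, prod_range_mul_prod_Ico _ hnN]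
    _ = ∫⁻ ω in A, ∏ i ∈ range n, W i ω ∂P := by
        rw [lintegral_mul_eq_lintegral_mul_lintegral_of_independent_measurableSpace
          (pastMeasurableSpace_le hW n) (iSup₂_le fun _ _ => (hW _).comap_le) hindep hpast
          hfuture, lintegral_prod_eq_one_of_iIndepFun hW hind hone, mul_one,
          lintegral_indicator hA']

theorem mul_measure_exists_le_prod_range_le_one (hW : ∀ i, Measurable (W i))
    (hind : iIndepFun W P) (hone : ∀ i, ∫⁻ ω, W i ω ∂P = 1) (c : ℝ≥0∞) :
    c * P {ω | ∃ n, c ≤ ∏ i ∈ range n, W i ω} ≤ 1 := by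
  set E : ℕ → Set Ω := fun n => {ω | c ≤ ∏ i ∈ range n, W i ω}
  have hE_past {k n : ℕ} (hkn : k ≤ n) : MeasurableSet[pastMeasurableSpace W n] (E k) :=
    measurableSet_le measurable_const (measurable_prod_range_pastMeasurableSpace W hkn)
  -- `disjointed E n` is the first-passage event `A n`.
  have hA_past (n : ℕ) : MeasurableSet[pastMeasurableSpace W n] (disjointed E n) := by
    rw [disjointed_eq_inter_compl]
    exact (hE_past le_rfl).inter (.iInter fun _ => .iInter fun hk => (hE_past hk.le).compl)
  have hA (n : ℕ) : MeasurableSet (disjointed E n) := pastMeasurableSpace_le hW n _ (hA_past n)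
  have hfirst {n N : ℕ} (hnN : n ≤ N) :
      c * P (disjointed E n) ≤ ∫⁻ ω in disjointed E n, ∏ i ∈ range N, W i ω ∂P := by
    rw [setLIntegral_prod_range_eq hW hind hone hnN (hA_past n), ← setLIntegral_const]
    exact setLIntegral_mono (Finset.measurable_prod _ fun i _ => hW i)
      fun ω hω => disjointed_subset E n hω
  have hunion : {ω | ∃ n, c ≤ ∏ i ∈ range n, W i ω} = ⋃ n, disjointed E n := by
    rw [iUnion_disjointed]
    ext ω
    simp [E]
  rw [hunion, measure_iUnion (disjoint_disjointed E) hA, ← ENNReal.tsum_mul_left]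
  refine ENNReal.tsum_le_of_sum_range_le fun N => ?_
  calc ∑ n ∈ range N, c * P (disjointed E n)
      ≤ ∑ n ∈ range N, ∫⁻ ω in disjointed E n, ∏ i ∈ range N, W i ω ∂P :=
        sum_le_sum fun n hn => hfirst (mem_range.mp hn).le
    _ = ∫⁻ ω in ⋃ n ∈ range N, disjointed E n, ∏ i ∈ range N, W i ω ∂P :=
        (lintegral_biUnion_finset ((disjoint_disjointed E).set_pairwise _) (fun n _ => hA n)
          _).symm
    _ ≤ ∫⁻ ω, ∏ i ∈ range N, W i ω ∂P := setLIntegral_le_lintegral _ _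
    _ = 1 := lintegral_prod_eq_one_of_iIndepFun hW hind hone _

end ProbabilityTheory

theorem cramer_lundberg_ruin_bound_general
    {Ω : Type*} [MeasurableSpace Ω] (P : Measure Ω)
    (X : ℕ → Ω → ℝ)
    (hmeas : ∀ i, Measurable (X i))
    (hindep : iIndepFun X P)
    (hident : ∀ i, IdentDistrib (X i) (X 0) P P)
    (R : ℝ) (hR : 0 < R)
    (hadj : ∫ ω, Real.exp (-R * X 0 ω) ∂P = 1)
    (u : ℝ) :
    P {ω | ∃ n : ℕ, (∑ i ∈ Finset.range (n + 1), X i ω) ≤ -u}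
      ≤ ENNReal.ofReal (Real.exp (-R * u)) := by
  set W : ℕ → Ω → ℝ≥0∞ := fun i ω => ENNReal.ofReal (Real.exp (-R * X i ω))
  have hg : Measurable fun x : ℝ => ENNReal.ofReal (Real.exp (-R * x)) := by fun_prop
  have hone (i : ℕ) : ∫⁻ ω, W i ω ∂P = 1 :=
    ((hident i).comp hg).lintegral_eq.trans <| lintegral_ofReal_eq_one_of_integral_eq_one
      (ae_of_all _ fun _ => (Real.exp_pos _).le) hadj
  have hprod (n : ℕ) (ω : Ω) : ∏ i ∈ range (n + 1), W i ω
      = ENNReal.ofReal (Real.exp (-R * ∑ i ∈ range (n + 1), X i ω)) := by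
    rw [← ENNReal.ofReal_prod_of_nonneg fun i _ => (Real.exp_pos _).le, ← Real.exp_sum, mul_sum]
  have hruin : {ω | ∃ n : ℕ, (∑ i ∈ range (n + 1), X i ω) ≤ -u}
      ⊆ {ω | ∃ n, ENNReal.ofReal (Real.exp (R * u)) ≤ ∏ i ∈ range n, W i ω} := by
    rintro ω ⟨n, hn⟩
    refine ⟨n + 1, ?_⟩
    rw [hprod]
    exact ENNReal.ofReal_le_ofReal (Real.exp_le_exp.2 (by nlinarith))
  have hville := mul_measure_exists_le_prod_range_le_one (fun i => hg.comp (hmeas i))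
    (hindep.comp _ fun _ => hg) hone (ENNReal.ofReal (Real.exp (R * u)))
  calc P {ω | ∃ n : ℕ, (∑ i ∈ range (n + 1), X i ω) ≤ -u}
      ≤ P {ω | ∃ n, ENNReal.ofReal (Real.exp (R * u)) ≤ ∏ i ∈ range n, W i ω} :=
        measure_mono hruin
    _ ≤ (ENNReal.ofReal (Real.exp (R * u)))⁻¹ := ENNReal.le_inv_iff_mul_le.mpr (by rwa [mul_comm])
    _ = ENNReal.ofReal (Real.exp (-R * u)) := by
        rw [← ENNReal.ofReal_inv_of_pos (Real.exp_pos _), ← Real.exp_neg, neg_mul]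

theorem cramer_lundberg_ruin_bound
    {Ω : Type*} [MeasurableSpace Ω] (P : Measure Ω) [IsProbabilityMeasure P]
    (X : ℕ → Ω → ℝ)
    (hmeas : ∀ i, Measurable (X i))
    (hindep : iIndepFun X P)
    (hident : ∀ i, IdentDistrib (X i) (X 0) P P)
    (hmean : 0 < ∫ ω, X 0 ω ∂P)
    (R : ℝ) (hR : 0 < R)
    (hadj : ∫ ω, Real.exp (-R * X 0 ω) ∂P = 1)
    (u : ℝ) (hu : 0 ≤ u) :
    P {ω | ∃ n : ℕ, (∑ i ∈ Finset.range (n + 1), X i ω) ≤ -u}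
      ≤ ENNReal.ofReal (Real.exp (-R * u)) :=
  cramer_lundberg_ruin_bound_general P X hmeas hindep hident R hR hadj u
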